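/- arXiv:2102.07800 — 6 statements merged into one kernel-verified Lean document; each statement's English description precedes it below -/
import Mathlib

section
/- Given a finite nonempty set 𝒜 of size n, a function v : 𝒜 → ℝ, a maximizer a* of v over 𝒜, and a parameter γ > 0, the expected suboptimality gap under the Inverse Gap Weighting distribution p is bounded as Σ_{a ∈ 𝒜, a ≠ a*} (v(a*) − v(a)) / (n + γ·(v(a*) − v(a))) ≤ (n − 1)/γ. -/
theorem div_add_mul_le_inv {c γ g : ℝ} (hc : 0 ≤ c) (hγ : 0 < γ) (hg : 0 ≤ g) :
    g / (c + γ * g) ≤ γ⁻¹ := by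
  rcases hg.eq_or_lt with rfl | hg
  · simpa using hγ.le
  calc g / (c + γ * g) ≤ g / (γ * g) :=
        div_le_div_of_nonneg_left hg.le (by positivity) (by linarith)
    _ = γ⁻¹ := by field_simp

theorem igw_expected_gap_bound_general {α : Type*} [Fintype α] [DecidableEq α]
    (v : α → ℝ) (astar : α) (hmax : ∀ a, v a ≤ v astar)
    (γ : ℝ) (hγ : 0 < γ) :
    ∑ a ∈ Finset.univ.erase astar,
        (v astar - v a) / ((Fintype.card α : ℝ) + γ * (v astar - v a))
      ≤ ((Fintype.card α : ℝ) - 1) / γ := by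
  have hcard : 1 ≤ Fintype.card α := Fintype.card_pos_iff.mpr ⟨astar⟩
  calc ∑ a ∈ Finset.univ.erase astar,
        (v astar - v a) / ((Fintype.card α : ℝ) + γ * (v astar - v a))
      ≤ (Finset.univ.erase astar).card • γ⁻¹ :=
        Finset.sum_le_card_nsmul _ _ _ fun a _ =>
          div_add_mul_le_inv (Nat.cast_nonneg _) hγ (sub_nonneg.mpr (hmax a))
    _ = ((Fintype.card α : ℝ) - 1) / γ := by
        rw [Finset.card_erase_of_mem (Finset.mem_univ _), Finset.card_univ, nsmul_eq_mul,
          Nat.cast_sub hcard, Nat.cast_one, div_eq_mul_inv]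

/-- The expected suboptimality gap under the Inverse Gap Weighting distribution is bounded
by `(n-1)/γ`. -/
theorem igw_expected_gap_bound {α : Type*} [Fintype α] [DecidableEq α]
    [Nonempty α] (v : α → ℝ) (astar : α) (hmax : ∀ a, v a ≤ v astar)
    (γ : ℝ) (hγ : 0 < γ) :
    ∑ a ∈ Finset.univ.erase astar,
        (v astar - v a) / ((Fintype.card α : ℝ) + γ * (v astar - v a))
      ≤ ((Fintype.card α : ℝ) - 1) / γ :=
  igw_expected_gap_bound_general v astar hmax γ hγ
end

section
/- Let 𝒜 be a finite set of size A, let 1 ≤ k ≤ A, let v : 𝒜 → ℝ, and let â : Fin A → 𝒜 be a bijection with v(â 1) ≥ v(â 2) ≥ … ≥ v(â A). Let T = {â 1, …, â (k−1)} be the set of top k−1 arms, let γ ≥ 0, and let p be the probability distribution on 𝒜 ∖ T (a set of size A−k+1) given by p(a) = 1/((A−k+1) + γ·(v(â k) − v(a))) for a ∈ 𝒜 ∖ T with a ≠ â k, and p(â k) = 1 − Σ_{a ∈ 𝒜∖T, a ≠ â k} p(a). Then for every injective map a : Fin k → 𝒜: (1/k)·Σ_{j=1}^k (1/p(a j))·𝟙{a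 j ∉ T} ≤ (A−k+1) + (γ/k)·Σ_{j=1}^k (v(â j) − v(a j)). -/
/-!
An arm `b ∉ T` other than `â k` has `1 / p b = (A - k + 1) + γ (v (â k) - v b) ≥ A - k + 1`, so
these `A - k` arms carry mass at most `(A - k) / (A - k + 1)` and `p (â k) ≥ 1 / (A - k + 1)`.
Hence `1 / p b ≤ (A - k + 1) + γ (v (â k) - v b)` for every `b ∉ T`, and it remains to bound
`∑ j, c (a j)`, where `c = v` on `T` and `c = v (â k)` off `T`, by `∑_{j ≤ k} v (â j)`. This is an
exchange argument: the `k` distinct arms `a j` contain, beyond the first, one arm outside `T` for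
each arm of `T` they miss, and every arm of `T` is worth at least `v (â k)`.
-/

open Finset

section Exchange

variable {α : Type*} [DecidableEq α]

theorem sum_ite_mem_add_card_nsmul_le {S T : Finset α} {v : α → ℝ} {w : ℝ}
    (hT : ∀ b ∈ T, w ≤ v b) :
    ∑ b ∈ S, (if b ∈ T then v b else w) + #T • w ≤ ∑ b ∈ T, v b + #S • w := by
  have hS : ∑ b ∈ S, (if b ∈ T then v b else w) = ∑ b ∈ S ∩ T, v b + #(S \ T) • w := by
    rw [sum_ite, filter_mem_eq_inter, filter_notMem_eq_sdiff, sum_const]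
  have hTsplit : ∑ b ∈ T, v b = ∑ b ∈ T \ S, v b + ∑ b ∈ S ∩ T, v b := by
    rw [inter_comm, ← sum_sdiff (inter_subset_left (s₁ := T)), sdiff_inter_self_left]
  have hTS : #(T \ S) • w ≤ ∑ b ∈ T \ S, v b :=
    card_nsmul_le_sum _ _ _ fun b hb => hT b (mem_sdiff.1 hb).1
  have hcard : #(S \ T) + #T = #S + #(T \ S) := by
    have := card_sdiff_add_card_inter S T
    have := card_sdiff_add_card_inter T S
    rw [inter_comm] at this
    omega
  have hw : #(S \ T) • w + #T • w = #S • w + #(T \ S) • w := by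
    rw [← add_nsmul, ← add_nsmul, hcard]
  linarith

theorem sum_ite_mem_le_of_card_eq_succ {S T : Finset α} {v : α → ℝ} {w : ℝ}
    (hT : ∀ b ∈ T, w ≤ v b) (hST : #S = #T + 1) :
    ∑ b ∈ S, (if b ∈ T then v b else w) ≤ ∑ b ∈ T, v b + w := by
  have := sum_ite_mem_add_card_nsmul_le (S := S) hT
  rw [hST, succ_nsmul] at this
  linarith

end Exchange

section InverseGapWeighting

variable {α : Type*} [DecidableEq α] {s : Finset α} {c : α} {v p : α → ℝ} {γ D : ℝ}

theorem one_div_card_le_one_sub_sum_erase (hc : c ∈ s)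
    (hp : ∀ b ∈ s.erase c, p b ≤ 1 / #s) :
    1 / (#s : ℝ) ≤ 1 - ∑ b ∈ s.erase c, p b := by
  have hs : (0 : ℝ) < #s := by exact_mod_cast card_pos.2 ⟨c, hc⟩
  have hsum : ∑ b ∈ s.erase c, p b ≤ #(s.erase c) • (1 / (#s : ℝ)) := sum_le_card_nsmul _ _ _ hp
  rw [card_erase_of_mem hc, nsmul_eq_mul, Nat.cast_pred (card_pos.2 ⟨c, hc⟩)] at hsum
  have : ((#s : ℝ) - 1) * (1 / #s) = 1 - 1 / #s := by field_simp
  linarith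

theorem one_div_igw_le (hc : c ∈ s) (hD : (#s : ℝ) = D) (hγ : 0 ≤ γ)
    (hv : ∀ b ∈ s, v b ≤ v c) (hp : ∀ b ∈ s, b ≠ c → p b = 1 / (D + γ * (v c - v b)))
    (hpc : p c = 1 - ∑ b ∈ s.erase c, p b) {b : α} (hb : b ∈ s) :
    1 / p b ≤ D + γ * (v c - v b) := by
  have hDpos : 0 < D := hD ▸ (by exact_mod_cast card_pos.2 ⟨c, hc⟩)
  by_cases hbc : b = c
  · subst hbc
    have hle : ∀ b' ∈ s.erase b, p b' ≤ 1 / #s := fun b' hb' => by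
      obtain ⟨hb'c, hb's⟩ := mem_erase.1 hb'
      rw [hp b' hb's hb'c, hD]
      exact one_div_le_one_div_of_le hDpos (le_add_of_nonneg_right
        (mul_nonneg hγ (sub_nonneg.2 (hv b' hb's))))
    have hpb : 1 / D ≤ p b := hD ▸ hpc ▸ one_div_card_le_one_sub_sum_erase hb hle
    rw [sub_self, mul_zero, add_zero]
    simpa using one_div_le_one_div_of_le (one_div_pos.2 hDpos) hpb
  · rw [hp b hb hbc, one_div_one_div]

end InverseGapWeighting

section TopArms

variable {ι α : Type*} [DecidableEq α] [LinearOrder ι] [LocallyFiniteOrderBot ι] {e : ι → α}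
  {v : α → ℝ} {i : ι}

theorem le_of_mem_image_Iio (he : Antitone (v ∘ e)) {b : α} (hb : b ∈ (Iio i).image e) :
    v (e i) ≤ v b := by
  obtain ⟨j, hj, rfl⟩ := mem_image.1 hb
  exact he (mem_Iio.1 hj).le

theorem le_of_notMem_image_Iio (he : Antitone (v ∘ e)) (hsurj : e.Surjective) {b : α}
    (hb : b ∉ (Iio i).image e) : v b ≤ v (e i) := by
  obtain ⟨j, rfl⟩ := hsurj b
  exact he (not_lt.1 fun hj => hb (mem_image_of_mem e (mem_Iio.2 hj)))

theorem apply_notMem_image_Iio (hinj : e.Injective) : e i ∉ (Iio i).image e := by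
  rw [mem_image]
  rintro ⟨j, hj, hji⟩
  exact (mem_Iio.1 hj).ne (hinj hji)

end TopArms

theorem sum_castLE_eq_add_sum_image_Iio {α : Type*} [DecidableEq α] {A k : ℕ} (hkA : k ≤ A)
    {K : Fin A} (hK : (K : ℕ) + 1 = k) {e : Fin A → α} (hinj : e.Injective) (f : α → ℝ) :
    ∑ j : Fin k, f (e (Fin.castLE hkA j)) = f (e K) + ∑ b ∈ (Iio K).image e, f b := by
  set K' : Fin k := ⟨K, by omega⟩
  have huniv : (univ : Finset (Fin k)) = Iic K' := by
    ext j
    simp only [mem_univ, mem_Iic, true_iff, Fin.le_def, K']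
    omega
  rw [sum_image hinj.injOn, huniv, ← Fin.sum_Iic_castLE hkA (fun i => f (e i)), ← Iio_insert,
    sum_insert notMem_Iio_self]
  rfl

theorem sum_mul_ite_mem_le {ι α : Type*} [Fintype ι] [DecidableEq α] {a : ι → α}
    (ha : a.Injective) {T : Finset α} (hcard : Fintype.card ι = #T + 1) {f v : α → ℝ}
    {w D γ : ℝ} (hD : 0 ≤ D) (hγ : 0 ≤ γ) (hT : ∀ b ∈ T, w ≤ v b)
    (hf : ∀ b ∉ T, f b ≤ D + γ * (w - v b)) :
    ∑ j, f (a j) * (if a j ∈ T then (0 : ℝ) else 1)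
      ≤ Fintype.card ι * D + γ * (∑ b ∈ T, v b + w - ∑ j, v (a j)) := by
  set c : α → ℝ := fun b => if b ∈ T then v b else w
  have hterm : ∀ j, f (a j) * (if a j ∈ T then (0 : ℝ) else 1)
      ≤ D + γ * (c (a j) - v (a j)) := by
    intro j
    by_cases h : a j ∈ T
    · simpa [c, h] using hD
    · simpa [c, h] using hf _ h
  have hexch : ∑ j, c (a j) ≤ ∑ b ∈ T, v b + w := by
    rw [← sum_image ha.injOn]
    exact sum_ite_mem_le_of_card_eq_succ hT (by rw [card_image_of_injective _ ha, card_univ, hcard])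
  calc _ ≤ ∑ j, (D + γ * (c (a j) - v (a j))) := sum_le_sum fun j _ => hterm j
    _ = Fintype.card ι * D + γ * (∑ j, c (a j) - ∑ j, v (a j)) := by
      rw [sum_add_distrib, ← mul_sum, sum_sub_distrib, sum_const, card_univ, nsmul_eq_mul]
    _ ≤ _ := by gcongr

/-- Bound on the average inverse IGW probability over any set of `k` distinct arms: if `T` is
the set of the top `k-1` arms according to `v` and `p` is the IGW distribution over the
remaining `A-k+1` arms, then for any injective `a : Fin k → 𝒜`,
`(1/k) Σ_j (1/p(a j)) 𝟙{a j ∉ T} ≤ (A-k+1) + (γ/k) Σ_j (v(â j) - v(a j))`. -/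
theorem igw_inverse_probability_bound {α : Type*} [Fintype α] [DecidableEq α]
    (A k : ℕ) (hcard : Fintype.card α = A) (hk : 1 ≤ k) (hkA : k ≤ A)
    (v : α → ℝ) (ahat : Fin A → α) (hbij : Function.Bijective ahat)
    (hdec : ∀ i j : Fin A, i ≤ j → v (ahat j) ≤ v (ahat i))
    (T : Finset α)
    (hT : T = (Finset.univ.filter fun j : Fin A => (j : ℕ) < k - 1).image ahat)
    (γ : ℝ) (hγ : 0 ≤ γ) (p : α → ℝ)
    (hp : ∀ b : α, b ∉ T → b ≠ ahat ⟨k - 1, by omega⟩ →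
      p b = 1 / (((A : ℝ) - k + 1) + γ * (v (ahat ⟨k - 1, by omega⟩) - v b)))
    (hpk : p (ahat ⟨k - 1, by omega⟩)
      = 1 - ∑ b ∈ (Finset.univ \ T).erase (ahat ⟨k - 1, by omega⟩), p b)
    (a : Fin k → α) (ha : Function.Injective a) :
    (1 / (k : ℝ)) * ∑ j : Fin k, (1 / p (a j)) * (if a j ∈ T then (0 : ℝ) else 1)
      ≤ ((A : ℝ) - k + 1)
        + (γ / (k : ℝ)) * ∑ j : Fin k, (v (ahat (Fin.castLE hkA j)) - v (a j)) := by
  set K : Fin A := ⟨k - 1, by omega⟩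
  set D : ℝ := (A : ℝ) - k + 1
  have hTI : T = (Iio K).image ahat := by
    rw [hT]
    congr 1
    ext j
    simp [K, Fin.lt_def]
  have hanti : Antitone (v ∘ ahat) := fun i j hij => hdec i j hij
  have hTcard : #T = k - 1 := by
    rw [hTI, card_image_of_injective _ hbij.injective, Fin.card_Iio]
  have hsD : (#(univ \ T) : ℝ) = D := by
    rw [card_univ_sdiff, hcard, hTcard, Nat.cast_sub (by omega), Nat.cast_sub hk]
    ring
  have hKs : ahat K ∈ univ \ T := by
    rw [hTI]
    exact mem_sdiff.2 ⟨mem_univ _, apply_notMem_image_Iio hbij.injective⟩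
  have hvs : ∀ b ∈ univ \ T, v b ≤ v (ahat K) := fun b hb =>
    le_of_notMem_image_Iio hanti hbij.surjective (hTI ▸ (mem_sdiff.1 hb).2)
  have hinv : ∀ b ∉ T, 1 / p b ≤ D + γ * (v (ahat K) - v b) := fun b hb =>
    one_div_igw_le hKs hsD hγ hvs (fun b' hb' => hp b' (mem_sdiff.1 hb').2) hpk
      (mem_sdiff.2 ⟨mem_univ _, hb⟩)
  have hsum := sum_mul_ite_mem_le ha (by rw [Fintype.card_fin, hTcard]; omega)
    (by linarith [show (k : ℝ) ≤ A by exact_mod_cast hkA]) hγ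
    (fun b hb => le_of_mem_image_Iio hanti (hTI ▸ hb)) hinv
  have htop : ∑ j : Fin k, v (ahat (Fin.castLE hkA j)) = ∑ b ∈ T, v b + v (ahat K) := by
    rw [hTI, sum_castLE_eq_add_sum_image_Iio hkA (K := K) (Nat.sub_add_cancel hk) hbij.injective,
      add_comm]
  rw [Fintype.card_fin, ← htop, ← sum_sub_distrib] at hsum
  have hk0 : (0 : ℝ) < k := by exact_mod_cast hk
  calc _ ≤ 1 / (k : ℝ) * (k * D + γ * ∑ j : Fin k, (v (ahat (Fin.castLE hkA j)) - v (a j))) := by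
        gcongr
    _ = _ := by field_simp
end

section
/- Under the described setup, suppose additionally that E[r(a) | X] = f*(X, a) almost surely for every a ∈ 𝒜 (realizability). Then E[Y] = (1/k)·Σ_{a ∈ 𝒜} E[(f(X,a) − f*(X,a))²·χ(a)], and Var[Y] ≤ 4·E[Y]. -/
/-!
With `ψ = f(X,a) - f*(X,a)` one has `(f(X,a) - r(a))² - (f*(X,a) - r(a))² = ψ² + 2ψ(f*(X,a) - r(a))`,
and the cross term has mean zero: given `X`, `χ(a)` and `r(a)` are independent, so
`E[ψ χ(a) r(a) | X] = ψ E[χ(a) | X] E[r(a) | X] = ψ E[χ(a) | X] f*(X,a)`.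
For the variance, all values lie in `[0,1]`, so the loss difference of arm `a` is at most `2|ψ|`
in absolute value, and Cauchy–Schwarz over the at most `k` observed arms gives
`Y² ≤ (4/k) Σ_a ψ² χ(a)`, whose mean is `4 E[Y]` by the first part.
-/

open MeasureTheory ProbabilityTheory Finset
open scoped ENNReal

section

variable {Ω : Type*} {m mΩ : MeasurableSpace Ω} {μ : Measure Ω}

theorem MeasureTheory.MemLp.mul_top {f g : Ω → ℝ} (hf : MemLp f ∞ μ) (hg : MemLp g ∞ μ) :
    MemLp (fun ω => f ω * g ω) ∞ μ :=
  hg.mul' (r := ∞) hf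

theorem memLp_top_of_forall_mem_Icc {f : Ω → ℝ} {a b : ℝ} (hf : AEStronglyMeasurable f μ)
    (h : ∀ ω, f ω ∈ Set.Icc a b) : MemLp f ∞ μ :=
  memLp_top_of_bound hf (max |a| |b|) (ae_of_all _ fun ω => abs_le_max_abs_abs (h ω).1 (h ω).2)

theorem ProbabilityTheory.variance_le_integral_of_sq_le [IsProbabilityMeasure μ] {Y Z : Ω → ℝ}
    (hY : AEStronglyMeasurable Y μ) (hZ : Integrable Z μ) (hYZ : ∀ᵐ ω ∂μ, Y ω ^ 2 ≤ Z ω) :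
    variance Y μ ≤ ∫ ω, Z ω ∂μ :=
  (variance_le_expectation_sq hY).trans
    (integral_mono_of_nonneg (ae_of_all _ fun ω => sq_nonneg (Y ω)) hZ hYZ)

variable [StandardBorelSpace Ω] {hm : m ≤ mΩ} [IsFiniteMeasure μ]

theorem ProbabilityTheory.CondIndepFun.condExp_mul {f g : Ω → ℝ}
    (hfg : CondIndepFun m hm f g μ) (hf : Measurable f) (hg : Measurable g)
    (hfi : Integrable f μ) (hgi : Integrable g μ) (hfgi : Integrable (f * g) μ) :
    μ[f * g | m] =ᵐ[μ] μ[f | m] * μ[g | m] := by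
  have hindep : ∀ᵐ ω ∂μ, IndepFun f g (condExpKernel μ m ω) := by
    refine ae_of_ae_trim hm ?_
    filter_upwards [(condIndepFun_iff_map_prod_eq_prod_map_map hf hg).1 hfg] with ω hω
    rw [indepFun_iff_map_prod_eq_prod_map_map hf.aemeasurable hg.aemeasurable]
    simpa [Kernel.map_apply _ (hf.prodMk hg), Kernel.prod_apply, Kernel.map_apply _ hf,
      Kernel.map_apply _ hg] using hω
  filter_upwards [hindep, condExp_ae_eq_integral_condExpKernel hm hfgi,
    condExp_ae_eq_integral_condExpKernel hm hfi, condExp_ae_eq_integral_condExpKernel hm hgi]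
    with ω hω hEfg hEf hEg
  rw [Pi.mul_apply, hEfg, hEf, hEg]
  exact hω.integral_mul_eq_mul_integral hf.aestronglyMeasurable hg.aestronglyMeasurable

theorem ProbabilityTheory.CondIndepFun.integral_mul_mul_condExp {ψ χ r : Ω → ℝ}
    (hind : CondIndepFun m hm χ r μ) (hψm : StronglyMeasurable[m] ψ) (hψ : MemLp ψ ∞ μ)
    (hχm : Measurable χ) (hχ : MemLp χ ∞ μ) (hrm : Measurable r) (hr : Integrable r μ) :
    ∫ ω, ψ ω * χ ω * (μ[r | m]) ω ∂μ = ∫ ω, ψ ω * χ ω * r ω ∂μ := by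
  have hχr : Integrable (χ * r) μ := hr.mul_of_top_right hχ
  have hfactor := hind.condExp_mul hχm hrm (hχ.integrable le_top) hr hχr
  calc ∫ ω, ψ ω * χ ω * (μ[r | m]) ω ∂μ
      = ∫ ω, (μ[(ψ * μ[r | m]) * χ | m]) ω ∂μ := by
        rw [integral_condExp hm]
        exact integral_congr_ae (ae_of_all _ fun ω => by simp only [Pi.mul_apply]; ring)
    _ = ∫ ω, ψ ω * (μ[χ | m] * μ[r | m]) ω ∂μ := by
        refine integral_congr_ae ?_
        filter_upwards [condExp_mul_of_stronglyMeasurable_left (hψm.mul stronglyMeasurable_condExp)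
          ((integrable_condExp.mul_of_top_right hψ).mul_of_top_left hχ) (hχ.integrable le_top)]
          with ω hω
        rw [hω]
        simp only [Pi.mul_apply]; ring
    _ = ∫ ω, ψ ω * (μ[χ * r | m]) ω ∂μ := by
        refine integral_congr_ae ?_
        filter_upwards [hfactor] with ω hω
        rw [hω]
    _ = ∫ ω, (μ[ψ * (χ * r) | m]) ω ∂μ :=
        integral_congr_ae (condExp_mul_of_stronglyMeasurable_left hψm
          (hχr.mul_of_top_right hψ) hχr).symm
    _ = ∫ ω, ψ ω * χ ω * r ω ∂μ := by
        rw [integral_condExp hm]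
        exact integral_congr_ae (ae_of_all _ fun ω => by simp only [Pi.mul_apply]; ring)

theorem integral_sub_sq_sub_sub_sq_mul_of_condExp_eq {f g r χ : Ω → ℝ}
    (hind : CondIndepFun m hm χ r μ) (hrg : μ[r | m] =ᵐ[μ] g)
    (hfm : StronglyMeasurable[m] f) (hgm : StronglyMeasurable[m] g) (hrm : Measurable r)
    (hχm : Measurable χ) (hf : MemLp f ∞ μ) (hg : MemLp g ∞ μ) (hr : MemLp r ∞ μ)
    (hχ : MemLp χ ∞ μ) :
    ∫ ω, ((f ω - r ω) ^ 2 - (g ω - r ω) ^ 2) * χ ω ∂μ = ∫ ω, (f ω - g ω) ^ 2 * χ ω ∂μ := by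
  set ψ : Ω → ℝ := fun ω => f ω - g ω
  have hψm : StronglyMeasurable[m] ψ := hfm.sub hgm
  have hψ : MemLp ψ ∞ μ := hf.sub hg
  have hint : ∀ h : Ω → ℝ, MemLp h ∞ μ → Integrable (fun ω => ψ ω * χ ω * h ω) μ :=
    fun h hh => ((hψ.mul_top hχ).mul_top hh).integrable le_top
  have hcross : ∫ ω, ψ ω * χ ω * g ω ∂μ = ∫ ω, ψ ω * χ ω * r ω ∂μ := by
    rw [← hind.integral_mul_mul_condExp hψm hψ hχm hχ hrm (hr.integrable le_top)]
    refine integral_congr_ae ?_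
    filter_upwards [hrg] with ω hω
    rw [hω]
  calc ∫ ω, ((f ω - r ω) ^ 2 - (g ω - r ω) ^ 2) * χ ω ∂μ
      = ∫ ω, ψ ω * χ ω * ψ ω + 2 * (ψ ω * χ ω * g ω - ψ ω * χ ω * r ω) ∂μ := by
        congr 1 with ω; ring
    _ = ∫ ω, (f ω - g ω) ^ 2 * χ ω ∂μ := by
        have hcross_int : Integrable (fun ω => ψ ω * χ ω * g ω - ψ ω * χ ω * r ω) μ :=
          (hint g hg).sub (hint r hr)
        rw [integral_add (hint ψ hψ) (hcross_int.const_mul 2),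
          integral_const_mul, integral_sub (hint g hg) (hint r hr), hcross, sub_self, mul_zero,
          add_zero]
        congr 1 with ω; ring

end

theorem sq_sub_sq_sub_sq_le_four_mul_sq {x y z : ℝ} (hx : x ∈ Set.Icc (0 : ℝ) 1)
    (hy : y ∈ Set.Icc (0 : ℝ) 1) (hz : z ∈ Set.Icc (0 : ℝ) 1) :
    ((x - z) ^ 2 - (y - z) ^ 2) ^ 2 ≤ 4 * (x - y) ^ 2 := by
  have h : (x + y - 2 * z) ^ 2 ≤ 2 ^ 2 :=
    sq_le_sq' (by linarith [hx.1, hy.1, hz.2]) (by linarith [hx.2, hy.2, hz.1])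
  calc ((x - z) ^ 2 - (y - z) ^ 2) ^ 2 = (x - y) ^ 2 * (x + y - 2 * z) ^ 2 := by ring
    _ ≤ (x - y) ^ 2 * 2 ^ 2 := mul_le_mul_of_nonneg_left h (sq_nonneg _)
    _ = 4 * (x - y) ^ 2 := by ring

theorem sq_mul_sum_sub_sq_sub_sq_mul_le {ι : Type*} (s : Finset ι) {k : ℝ} (hk : 0 < k)
    {f g r c : ι → ℝ} (hf : ∀ i, f i ∈ Set.Icc (0 : ℝ) 1) (hg : ∀ i, g i ∈ Set.Icc (0 : ℝ) 1)
    (hr : ∀ i, r i ∈ Set.Icc (0 : ℝ) 1) (hc : ∀ i, 0 ≤ c i) (hck : ∑ i ∈ s, c i ≤ k) :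
    (1 / k * ∑ i ∈ s, ((f i - r i) ^ 2 - (g i - r i) ^ 2) * c i) ^ 2
      ≤ 4 * (1 / k * ∑ i ∈ s, (f i - g i) ^ 2 * c i) := by
  set T := ∑ i ∈ s, 4 * (f i - g i) ^ 2 * c i
  have hT : 0 ≤ T := sum_nonneg fun i _ => by have := hc i; positivity
  -- weighted Cauchy–Schwarz with weights `c i`
  have hcs : (∑ i ∈ s, ((f i - r i) ^ 2 - (g i - r i) ^ 2) * c i) ^ 2 ≤ (∑ i ∈ s, c i) * T := by
    refine sum_sq_le_sum_mul_sum_of_sq_le_mul s (fun i _ => hc i)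
      (fun i _ => by have := hc i; positivity) fun i _ => ?_
    calc (((f i - r i) ^ 2 - (g i - r i) ^ 2) * c i) ^ 2
        = ((f i - r i) ^ 2 - (g i - r i) ^ 2) ^ 2 * c i ^ 2 := mul_pow _ _ _
      _ ≤ 4 * (f i - g i) ^ 2 * c i ^ 2 :=
        mul_le_mul_of_nonneg_right (sq_sub_sq_sub_sq_le_four_mul_sq (hf i) (hg i) (hr i))
          (sq_nonneg _)
      _ = c i * (4 * (f i - g i) ^ 2 * c i) := by ring
  calc (1 / k * ∑ i ∈ s, ((f i - r i) ^ 2 - (g i - r i) ^ 2) * c i) ^ 2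
      = (∑ i ∈ s, ((f i - r i) ^ 2 - (g i - r i) ^ 2) * c i) ^ 2 / k ^ 2 := by ring
    _ ≤ k * T / k ^ 2 := by gcongr; exact hcs.trans (mul_le_mul_of_nonneg_right hck hT)
    _ = 4 * (1 / k * ∑ i ∈ s, (f i - g i) ^ 2 * c i) := by
      simp only [T, mul_assoc, ← mul_sum]
      field_simp

theorem sub_sq_sub_sub_sq_mul_mem_Icc {x y z c : ℝ} (hx : x ∈ Set.Icc (0 : ℝ) 1)
    (hy : y ∈ Set.Icc (0 : ℝ) 1) (hz : z ∈ Set.Icc (0 : ℝ) 1) (hc : c ∈ Set.Icc (0 : ℝ) 1) :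
    ((x - z) ^ 2 - (y - z) ^ 2) * c ∈ Set.Icc (-1 : ℝ) 1 := by
  obtain ⟨hx0, hx1⟩ := hx; obtain ⟨hy0, hy1⟩ := hy; obtain ⟨hz0, hz1⟩ := hz
  obtain ⟨hc0, hc1⟩ := hc
  constructor <;> nlinarith [mul_nonneg (sq_nonneg (x - z)) hc0, mul_nonneg (sq_nonneg (y - z)) hc0]

theorem sub_sq_mul_mem_Icc {x y c : ℝ} (hx : x ∈ Set.Icc (0 : ℝ) 1)
    (hy : y ∈ Set.Icc (0 : ℝ) 1) (hc : c ∈ Set.Icc (0 : ℝ) 1) :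
    (x - y) ^ 2 * c ∈ Set.Icc (0 : ℝ) 1 := by
  obtain ⟨hx0, hx1⟩ := hx; obtain ⟨hy0, hy1⟩ := hy; obtain ⟨hc0, hc1⟩ := hc
  constructor <;> nlinarith [mul_nonneg (sq_nonneg (x - y)) hc0]

theorem excess_loss_mean_variance_realizable_general
    {Ω 𝒳 α : Type*} [MeasurableSpace Ω] [StandardBorelSpace Ω]
    [MeasurableSpace 𝒳] [Fintype α]
    (μ : Measure Ω) [IsProbabilityMeasure μ]
    (k : ℕ) (hk : 1 ≤ k)
    (X : Ω → 𝒳) (hX : Measurable X)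
    (r : α → Ω → ℝ) (hr_meas : ∀ a, Measurable (r a))
    (hr01 : ∀ a ω, r a ω ∈ Set.Icc (0 : ℝ) 1)
    (χ : α → Ω → ℝ) (hχ_meas : ∀ a, Measurable (χ a))
    (hχ01 : ∀ a ω, χ a ω = 0 ∨ χ a ω = 1)
    (hsum : ∀ᵐ ω ∂μ, ∑ a : α, χ a ω ≤ (k : ℝ))
    (hcondindep : ∀ a : α, CondIndepFun (MeasurableSpace.comap X inferInstance)
      hX.comap_le (χ a) (r a) μ)
    (f fstar : 𝒳 → α → ℝ)
    (hf_meas : ∀ a, Measurable fun x => f x a)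
    (hfstar_meas : ∀ a, Measurable fun x => fstar x a)
    (hf01 : ∀ x a, f x a ∈ Set.Icc (0 : ℝ) 1)
    (hfstar01 : ∀ x a, fstar x a ∈ Set.Icc (0 : ℝ) 1)
    (hrealizable : ∀ a : α,
      μ[r a | MeasurableSpace.comap X inferInstance] =ᵐ[μ] fun ω => fstar (X ω) a)
    (Y : Ω → ℝ)
    (hY : Y = fun ω => (1 / (k : ℝ)) *
      ∑ a : α, ((f (X ω) a - r a ω) ^ 2 - (fstar (X ω) a - r a ω) ^ 2) * χ a ω) :
    (∫ ω, Y ω ∂μ)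
        = (1 / (k : ℝ)) * ∑ a : α, ∫ ω, (f (X ω) a - fstar (X ω) a) ^ 2 * χ a ω ∂μ
      ∧ ProbabilityTheory.variance Y μ ≤ 4 * ∫ ω, Y ω ∂μ := by
  have hk0 : (0 : ℝ) < k := by exact_mod_cast hk
  have hχ01' : ∀ a ω, χ a ω ∈ Set.Icc (0 : ℝ) 1 := fun a ω => by
    rcases hχ01 a ω with h | h <;> simp [h]
  have hM : ∀ {h : Ω → ℝ}, Measurable h → (∀ ω, h ω ∈ Set.Icc (0 : ℝ) 1) → MemLp h ∞ μ :=
    fun hh h01 => memLp_top_of_forall_mem_Icc hh.aestronglyMeasurable h01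
  have hL_int : ∀ a, Integrable (fun ω =>
      ((f (X ω) a - r a ω) ^ 2 - (fstar (X ω) a - r a ω) ^ 2) * χ a ω) μ := fun a =>
    .of_mem_Icc (-1) 1 (by fun_prop) (ae_of_all _ fun ω =>
      sub_sq_sub_sub_sq_mul_mem_Icc (hf01 _ a) (hfstar01 _ a) (hr01 a ω) (hχ01' a ω))
  have hD_int : ∀ a, Integrable (fun ω => (f (X ω) a - fstar (X ω) a) ^ 2 * χ a ω) μ := fun a =>
    .of_mem_Icc 0 1 (by fun_prop) (ae_of_all _ fun ω =>
      sub_sq_mul_mem_Icc (hf01 _ a) (hfstar01 _ a) (hχ01' a ω))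
  have hmean : ∫ ω, Y ω ∂μ
      = (1 / (k : ℝ)) * ∑ a : α, ∫ ω, (f (X ω) a - fstar (X ω) a) ^ 2 * χ a ω ∂μ := by
    have hXm : Measurable[MeasurableSpace.comap X inferInstance] X := comap_measurable X
    rw [hY, integral_const_mul, integral_finsetSum _ fun a _ => hL_int a]
    congr 1
    refine sum_congr rfl fun a _ => integral_sub_sq_sub_sub_sq_mul_of_condExp_eq
      (hcondindep a) (hrealizable a) ((hf_meas a).comp hXm).stronglyMeasurable
      ((hfstar_meas a).comp hXm).stronglyMeasurable (hr_meas a) (hχ_meas a)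
      (hM (by fun_prop) fun ω => hf01 _ a) (hM (by fun_prop) fun ω => hfstar01 _ a)
      (hM (hr_meas a) (hr01 a)) (hM (hχ_meas a) (hχ01' a))
  refine ⟨hmean, ?_⟩
  calc variance Y μ
      ≤ ∫ ω, 4 * ((1 / (k : ℝ)) * ∑ a : α, (f (X ω) a - fstar (X ω) a) ^ 2 * χ a ω) ∂μ := by
        refine variance_le_integral_of_sq_le (hY ▸ by fun_prop)
          (((integrable_finsetSum _ fun a _ => hD_int a).const_mul _).const_mul _) ?_
        filter_upwards [hsum] with ω hω
        simpa only [hY] using sq_mul_sum_sub_sq_sub_sq_mul_le _ hk0 (fun a => hf01 (X ω) a)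
          (fun a => hfstar01 (X ω) a) (fun a => hr01 a ω) (fun a => (hχ01' a ω).1) hω
    _ = 4 * ∫ ω, Y ω ∂μ := by
        rw [integral_const_mul, integral_const_mul, integral_finsetSum _ fun a _ => hD_int a,
          hmean]

/-- Mean and variance of the per-round excess-loss random variable in the realizable setting:
if `E[r(a) | X] = f*(X, a)` a.s. for every arm `a`, then
`E[Y] = (1/k) Σ_a E[(f(X,a) - f*(X,a))² χ(a)]` and `Var[Y] ≤ 4 E[Y]`. -/
theorem excess_loss_mean_variance_realizable
    {Ω 𝒳 α : Type*} [MeasurableSpace Ω] [StandardBorelSpace Ω] [Nonempty Ω]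
    [MeasurableSpace 𝒳] [Fintype α]
    (μ : Measure Ω) [IsProbabilityMeasure μ]
    (k : ℕ) (hk : 1 ≤ k)
    (X : Ω → 𝒳) (hX : Measurable X)
    (r : α → Ω → ℝ) (hr_meas : ∀ a, Measurable (r a))
    (hr01 : ∀ a ω, r a ω ∈ Set.Icc (0 : ℝ) 1)
    (χ : α → Ω → ℝ) (hχ_meas : ∀ a, Measurable (χ a))
    (hχ01 : ∀ a ω, χ a ω = 0 ∨ χ a ω = 1)
    (hsum : ∀ᵐ ω ∂μ, ∑ a : α, χ a ω ≤ (k : ℝ))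
    (hcondindep : ∀ a : α, CondIndepFun (MeasurableSpace.comap X inferInstance)
      hX.comap_le (χ a) (r a) μ)
    (f fstar : 𝒳 → α → ℝ)
    (hf_meas : ∀ a, Measurable fun x => f x a)
    (hfstar_meas : ∀ a, Measurable fun x => fstar x a)
    (hf01 : ∀ x a, f x a ∈ Set.Icc (0 : ℝ) 1)
    (hfstar01 : ∀ x a, fstar x a ∈ Set.Icc (0 : ℝ) 1)
    (hrealizable : ∀ a : α,
      μ[r a | MeasurableSpace.comap X inferInstance] =ᵐ[μ] fun ω => fstar (X ω) a)
    (Y : Ω → ℝ)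
    (hY : Y = fun ω => (1 / (k : ℝ)) *
      ∑ a : α, ((f (X ω) a - r a ω) ^ 2 - (fstar (X ω) a - r a ω) ^ 2) * χ a ω) :
    (∫ ω, Y ω ∂μ)
        = (1 / (k : ℝ)) * ∑ a : α, ∫ ω, (f (X ω) a - fstar (X ω) a) ^ 2 * χ a ω ∂μ
      ∧ ProbabilityTheory.variance Y μ ≤ 4 * ∫ ω, Y ω ∂μ :=
  excess_loss_mean_variance_realizable_general μ k hk X hX r hr_meas hr01 χ hχ_meas hχ01 hsum
    hcondindep f fstar hf_meas hfstar_meas hf01 hfstar01 hrealizable Y hY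
end

section
/- Under the described setup, suppose additionally that there exists ε ≥ 0 such that |E[r(a) | X] − f*(X, a)| ≤ ε almost surely for every a ∈ 𝒜 (ε-misspecification). Then Var[Y] ≤ 8·E[Y] + 16·ε². -/
/-!
Write `d_a = f(X,a) - f*(X,a)` and `G_a = E[r(a) | X]`. The loss difference of arm `a` factors
as `d_a (f(X,a) + f*(X,a) - 2 r(a))`, so by Cauchy–Schwarz over the at most `k` observed arms,
`Y² ≤ (4/k) Σ_a d_a² χ(a)`. On the other hand, since `d_a` is `X`-measurable and `χ(a)` is
conditionally independent of `r(a)` given `X`, one may replace `r(a)` by `G_a` inside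
`E[d_a χ(a) r(a)]`; together with `|G_a - f*(X,a)| ≤ ε` this gives
`E[loss difference · χ(a)] ≥ E[d_a² χ(a)] / 2 - 2ε² E[χ(a)]`.
Summing over the arms and using `Var Y ≤ E[Y²]` yields the bound.
-/

open MeasureTheory ProbabilityTheory Finset

section ExcessLoss

variable {Ω : Type*} {m mΩ : MeasurableSpace Ω} {μ : Measure Ω}

theorem sq_inv_mul_sum_mul_le {ι : Type*} (s : Finset ι) (x : ι → ℝ) {w : ι → ℝ} {k : ℝ}
    (hw : ∀ i ∈ s, 0 ≤ w i) (hk : ∑ i ∈ s, w i ≤ k) :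
    (k⁻¹ * ∑ i ∈ s, x i * w i) ^ 2 ≤ k⁻¹ * ∑ i ∈ s, x i ^ 2 * w i := by
  have hxw : 0 ≤ ∑ i ∈ s, x i ^ 2 * w i := sum_nonneg fun i hi => mul_nonneg (sq_nonneg _) (hw i hi)
  have hcs : (∑ i ∈ s, x i * w i) ^ 2 ≤ (∑ i ∈ s, w i) * ∑ i ∈ s, x i ^ 2 * w i :=
    sum_sq_le_sum_mul_sum_of_sq_le_mul s hw (fun i hi => mul_nonneg (sq_nonneg _) (hw i hi))
      fun i _ => le_of_eq (by ring)
  calc (k⁻¹ * ∑ i ∈ s, x i * w i) ^ 2 ≤ k⁻¹ ^ 2 * (k * ∑ i ∈ s, x i ^ 2 * w i) := by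
        rw [mul_pow]
        gcongr
        exact hcs.trans (mul_le_mul_of_nonneg_right hk hxw)
    _ = k⁻¹ * ∑ i ∈ s, x i ^ 2 * w i := by
        rcases eq_or_ne k 0 with rfl | hk0 <;> field_simp

theorem sub_sq_sub_sub_sq_sq_le {a b c : ℝ} (ha : a ∈ Set.Icc (0 : ℝ) 1)
    (hb : b ∈ Set.Icc (0 : ℝ) 1) (hc : c ∈ Set.Icc (0 : ℝ) 1) : ((a - c) ^ 2 - (b - c) ^ 2) ^ 2 ≤ 4 * (a - b) ^ 2 := by
  obtain ⟨ha0, ha1⟩ := ha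
  obtain ⟨hb0, hb1⟩ := hb
  obtain ⟨hc0, hc1⟩ := hc
  have hsum : (a + b - 2 * c) ^ 2 ≤ 4 := by nlinarith
  calc ((a - c) ^ 2 - (b - c) ^ 2) ^ 2 = (a - b) ^ 2 * (a + b - 2 * c) ^ 2 := by ring
    _ ≤ (a - b) ^ 2 * 4 := by gcongr
    _ = 4 * (a - b) ^ 2 := by ring

/-- With `d = F - Fs` one has `(F - r)² - (Fs - r)² = d² + 2 d (Fs - r)`, and
`2 d (G - Fs) ≤ d²/2 + 2ε²`. -/
theorem sub_sq_sub_sub_sq_mul_lower_bound {F Fs r G χ ε : ℝ} (hχ : 0 ≤ χ)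
    (hG : |G - Fs| ≤ ε) :
    (F - Fs) ^ 2 * χ / 2 - 2 * ε ^ 2 * χ + 2 * ((F - Fs) * (χ * G))
      ≤ ((F - r) ^ 2 - (Fs - r) ^ 2) * χ + 2 * ((F - Fs) * (χ * r)) := by
  have hsq : (G - Fs) ^ 2 ≤ ε ^ 2 := sq_le_sq' (abs_le.1 hG).1 (abs_le.1 hG).2
  have hamgm : 2 * (F - Fs) * (G - Fs) ≤ (F - Fs) ^ 2 / 2 + 2 * ε ^ 2 := by
    nlinarith [sq_nonneg (F - Fs - 2 * (G - Fs))]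
  nlinarith [mul_le_mul_of_nonneg_right hamgm hχ]

section Integrability

variable [IsFiniteMeasure μ] {r χ F Fs : Ω → ℝ}

theorem integrable_sub_sq_mul (hF : Measurable F) (hFs : Measurable Fs) (hχ : Measurable χ)
    (hF01 : ∀ ω, F ω ∈ Set.Icc (0 : ℝ) 1) (hFs01 : ∀ ω, Fs ω ∈ Set.Icc (0 : ℝ) 1)
    (hχ01 : ∀ ω, χ ω ∈ Set.Icc (0 : ℝ) 1) :
    Integrable (fun ω => (F ω - Fs ω) ^ 2 * χ ω) μ :=
  Integrable.of_mem_Icc 0 1 (by fun_prop) <| ae_of_all _ fun ω => by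
    obtain ⟨hF0, hF1⟩ := hF01 ω
    obtain ⟨hFs0, hFs1⟩ := hFs01 ω
    obtain ⟨hχ0, hχ1⟩ := hχ01 ω
    constructor
    · positivity
    · nlinarith

theorem integrable_sub_sq_sub_sub_sq_mul (hF : Measurable F) (hFs : Measurable Fs)
    (hr : Measurable r) (hχ : Measurable χ) (hF01 : ∀ ω, F ω ∈ Set.Icc (0 : ℝ) 1)
    (hFs01 : ∀ ω, Fs ω ∈ Set.Icc (0 : ℝ) 1) (hr01 : ∀ ω, r ω ∈ Set.Icc (0 : ℝ) 1)
    (hχ01 : ∀ ω, χ ω ∈ Set.Icc (0 : ℝ) 1) :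
    Integrable (fun ω => ((F ω - r ω) ^ 2 - (Fs ω - r ω) ^ 2) * χ ω) μ :=
  Integrable.of_mem_Icc (-1) 1 (by fun_prop) <| ae_of_all _ fun ω => by
    obtain ⟨hF0, hF1⟩ := hF01 ω
    obtain ⟨hFs0, hFs1⟩ := hFs01 ω
    obtain ⟨hr0, hr1⟩ := hr01 ω
    obtain ⟨hχ0, hχ1⟩ := hχ01 ω
    constructor <;> nlinarith [mul_nonneg (mul_nonneg hF0 hFs0) hχ0]

end Integrability

section ConditionalIndependence

variable [IsFiniteMeasure μ]

theorem integral_mul_condExp_of_stronglyMeasurable (hm : m ≤ mΩ) {φ ψ : Ω → ℝ}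
    (hφ : StronglyMeasurable[m] φ) (hφψ : Integrable (φ * ψ) μ) (hψ : Integrable ψ μ) :
    ∫ ω, φ ω * μ[ψ | m] ω ∂μ = ∫ ω, φ ω * ψ ω ∂μ :=
  (integral_congr_ae (condExp_mul_of_stronglyMeasurable_left hφ hφψ hψ).symm).trans
    (integral_condExp hm)

variable [StandardBorelSpace Ω]

/-- Conditional independence is independence under the conditional kernel `condExpKernel μ m ω`
for a.e. `ω`, and conditional expectations are integrals against that kernel. -/
theorem condExp_mul_ae_eq_of_condIndepFun (hm : m ≤ mΩ) {f g : Ω → ℝ}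
    (hf : Measurable f) (hg : Measurable g) (hfg : CondIndepFun m hm f g μ)
    (hf_int : Integrable f μ) (hg_int : Integrable g μ) (hfg_int : Integrable (f * g) μ) :
    μ[f * g | m] =ᵐ[μ] μ[f | m] * μ[g | m] := by
  have h := ae_of_ae_trim hm ((condIndepFun_iff_map_prod_eq_prod_map_map hf hg).1 hfg)
  filter_upwards [h, condExp_ae_eq_integral_condExpKernel hm hfg_int,
    condExp_ae_eq_integral_condExpKernel hm hf_int,
    condExp_ae_eq_integral_condExpKernel hm hg_int] with ω hω hfg_eq hf_eq hg_eq
  have hindep : IndepFun f g (condExpKernel μ m ω) := by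
    rw [indepFun_iff_map_prod_eq_prod_map_map hf.aemeasurable hg.aemeasurable]
    simpa [Kernel.map_apply _ (hf.prodMk hg), Kernel.map_apply _ hf, Kernel.map_apply _ hg,
      Kernel.prod_apply] using hω
  rw [hfg_eq, Pi.mul_apply, hf_eq, hg_eq]
  exact hindep.integral_mul_eq_mul_integral hf.aestronglyMeasurable hg.aestronglyMeasurable

theorem integral_mul_mul_condExp_of_condIndepFun (hm : m ≤ mΩ) {h f g : Ω → ℝ}
    (hh : StronglyMeasurable[m] h) (hf : Measurable f) (hg : Measurable g)
    (hh_bdd : MemLp h ⊤ μ) (hf_bdd : MemLp f ⊤ μ) (hg_bdd : MemLp g ⊤ μ)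
    (hfg : CondIndepFun m hm f g μ) :
    ∫ ω, h ω * (f ω * g ω) ∂μ = ∫ ω, h ω * (f ω * μ[g | m] ω) ∂μ := by
  have hfg_bdd : MemLp (f * g) ⊤ μ := hg_bdd.mul hf_bdd (r := ⊤)
  have hgm_bdd : MemLp (μ[g | m]) ⊤ μ := hg_bdd.condExp le_top
  calc ∫ ω, h ω * (f ω * g ω) ∂μ = ∫ ω, h ω * (μ[f | m] ω * μ[g | m] ω) ∂μ := by
        refine (integral_mul_condExp_of_stronglyMeasurable hm hh
          ((hfg_bdd.mul hh_bdd (r := ⊤)).integrable le_top)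
          (hfg_bdd.integrable le_top)).symm.trans (integral_congr_ae ?_)
        filter_upwards [condExp_mul_ae_eq_of_condIndepFun hm hf hg hfg
          (hf_bdd.integrable le_top) (hg_bdd.integrable le_top)
          (hfg_bdd.integrable le_top)] with ω hω
        rw [hω, Pi.mul_apply]
    _ = ∫ ω, (h * μ[g | m]) ω * μ[f | m] ω ∂μ := by
        congr 1 with ω
        simp only [Pi.mul_apply]
        ring
    _ = ∫ ω, h ω * (f ω * μ[g | m] ω) ∂μ := by
        rw [integral_mul_condExp_of_stronglyMeasurable hm (hh.mul stronglyMeasurable_condExp)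
          ((hf_bdd.mul (hgm_bdd.mul hh_bdd (r := ⊤)) (r := ⊤)).integrable le_top)
          (hf_bdd.integrable le_top)]
        congr 1 with ω
        simp only [Pi.mul_apply]
        ring

theorem integral_sub_sq_mul_le_of_condIndepFun (hm : m ≤ mΩ) {r χ F Fs : Ω → ℝ} {ε : ℝ}
    (hr : Measurable r) (hχ : Measurable χ)
    (hF : Measurable[m] F) (hFs : Measurable[m] Fs)
    (hr01 : ∀ ω, r ω ∈ Set.Icc (0 : ℝ) 1) (hχ01 : ∀ ω, χ ω ∈ Set.Icc (0 : ℝ) 1)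
    (hF01 : ∀ ω, F ω ∈ Set.Icc (0 : ℝ) 1) (hFs01 : ∀ ω, Fs ω ∈ Set.Icc (0 : ℝ) 1)
    (hχr : CondIndepFun m hm χ r μ) (hmis : ∀ᵐ ω ∂μ, |μ[r | m] ω - Fs ω| ≤ ε) :
    ∫ ω, (F ω - Fs ω) ^ 2 * χ ω ∂μ ≤
      2 * ∫ ω, ((F ω - r ω) ^ 2 - (Fs ω - r ω) ^ 2) * χ ω ∂μ + 4 * ε ^ 2 * ∫ ω, χ ω ∂μ := by
  have hFm : Measurable F := hF.mono hm le_rfl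
  have hFsm : Measurable Fs := hFs.mono hm le_rfl
  have bdd {g : Ω → ℝ} (hg : Measurable g) (hg01 : ∀ ω, g ω ∈ Set.Icc (0 : ℝ) 1) :
      MemLp g ⊤ μ :=
    memLp_of_bounded (ae_of_all _ hg01) hg.aestronglyMeasurable ⊤
  have mul {f g : Ω → ℝ} (hf : MemLp f ⊤ μ) (hg : MemLp g ⊤ μ) :
      MemLp (fun ω => f ω * g ω) ⊤ μ :=
    hg.mul' hf
  have hd := (bdd hFm hF01).sub (bdd hFsm hFs01)
  have key : ∫ ω, (F ω - Fs ω) * (χ ω * r ω) ∂μ = ∫ ω, (F ω - Fs ω) * (χ ω * μ[r | m] ω) ∂μ :=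
    integral_mul_mul_condExp_of_condIndepFun hm (hF.sub hFs).stronglyMeasurable hχ hr hd
      (bdd hχ hχ01) (bdd hr hr01) hχr
  have hD := integrable_sub_sq_mul (μ := μ) hFm hFsm hχ hF01 hFs01 hχ01
  have hZ := integrable_sub_sq_sub_sub_sq_mul (μ := μ) hFm hFsm hr hχ hF01 hFs01 hr01 hχ01
  have hχ_int : Integrable χ μ := (bdd hχ hχ01).integrable le_top
  have hdχG : Integrable (fun ω => (F ω - Fs ω) * (χ ω * μ[r | m] ω)) μ :=
    (mul hd (mul (bdd hχ hχ01) ((bdd hr hr01).condExp le_top))).integrable le_top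
  have hdχr : Integrable (fun ω => (F ω - Fs ω) * (χ ω * r ω)) μ :=
    (mul hd (mul (bdd hχ hχ01) (bdd hr hr01))).integrable le_top
  have hpt : ∀ᵐ ω ∂μ, (F ω - Fs ω) ^ 2 * χ ω / 2 - 2 * ε ^ 2 * χ ω
      + 2 * ((F ω - Fs ω) * (χ ω * μ[r | m] ω))
      ≤ ((F ω - r ω) ^ 2 - (Fs ω - r ω) ^ 2) * χ ω + 2 * ((F ω - Fs ω) * (χ ω * r ω)) :=
    hmis.mono fun ω hω => sub_sq_sub_sub_sq_mul_lower_bound (hχ01 ω).1 hω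
  have hlin : Integrable (fun ω => (F ω - Fs ω) ^ 2 * χ ω / 2 - 2 * ε ^ 2 * χ ω) μ :=
    (hD.div_const 2).sub (hχ_int.const_mul _)
  have h := integral_mono_ae (hlin.add (hdχG.const_mul 2)) (hZ.add (hdχr.const_mul 2)) hpt
  simp only [Pi.add_apply] at h
  rw [integral_add hlin (hdχG.const_mul 2), integral_sub (hD.div_const 2) (hχ_int.const_mul _),
    integral_add hZ (hdχr.const_mul 2), integral_div, integral_const_mul, integral_const_mul,
    integral_const_mul] at h
  linarith [key]

end ConditionalIndependence

theorem variance_inv_mul_sum_le {α : Type*} [Fintype α] [IsProbabilityMeasure μ] {k : ℕ}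
    {Z D χ : α → Ω → ℝ} {b c e : ℝ}
    (hZ : ∀ a, Integrable (fun ω => Z a ω * χ a ω) μ)
    (hD : ∀ a, Integrable (fun ω => D a ω * χ a ω) μ) (hχ : ∀ a, Integrable (χ a) μ)
    (hχ0 : ∀ a ω, 0 ≤ χ a ω) (hsum : ∀ᵐ ω ∂μ, ∑ a, χ a ω ≤ k)
    (hc : 0 ≤ c) (he : 0 ≤ e) (hZD : ∀ a ω, Z a ω ^ 2 ≤ c * D a ω)
    (harm : ∀ a, ∫ ω, D a ω * χ a ω ∂μ ≤ b * ∫ ω, Z a ω * χ a ω ∂μ + e * ∫ ω, χ a ω ∂μ) :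
    variance (fun ω => (k : ℝ)⁻¹ * ∑ a, Z a ω * χ a ω) μ
      ≤ c * b * ∫ ω, (k : ℝ)⁻¹ * ∑ a, Z a ω * χ a ω ∂μ + c * e := by
  have hYint : Integrable (fun ω => (k : ℝ)⁻¹ * ∑ a, Z a ω * χ a ω) μ :=
    (integrable_finsetSum _ fun a _ => hZ a).const_mul _
  have hDint : Integrable (fun ω => c * ((k : ℝ)⁻¹ * ∑ a, D a ω * χ a ω)) μ :=
    ((integrable_finsetSum _ fun a _ => hD a).const_mul _).const_mul _
  have hpt : ∀ᵐ ω ∂μ, ((k : ℝ)⁻¹ * ∑ a, Z a ω * χ a ω) ^ 2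
      ≤ c * ((k : ℝ)⁻¹ * ∑ a, D a ω * χ a ω) := by
    filter_upwards [hsum] with ω hω
    calc ((k : ℝ)⁻¹ * ∑ a, Z a ω * χ a ω) ^ 2 ≤ (k : ℝ)⁻¹ * ∑ a, Z a ω ^ 2 * χ a ω :=
          sq_inv_mul_sum_mul_le _ _ (fun a _ => hχ0 a ω) hω
      _ ≤ (k : ℝ)⁻¹ * ∑ a, c * D a ω * χ a ω := by
          gcongr with a
          · exact hχ0 a ω
          · exact hZD a ω
      _ = c * ((k : ℝ)⁻¹ * ∑ a, D a ω * χ a ω) := by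
          rw [mul_sum, mul_sum, mul_sum]
          exact sum_congr rfl fun a _ => by ring
  have hχk : (k : ℝ)⁻¹ * ∑ a, ∫ ω, χ a ω ∂μ ≤ 1 := by
    refine inv_mul_le_one_of_le₀ ?_ k.cast_nonneg
    rw [← integral_finsetSum _ fun a _ => hχ a]
    simpa using integral_mono_ae (integrable_finsetSum _ fun a _ => hχ a) (integrable_const _) hsum
  calc variance (fun ω => (k : ℝ)⁻¹ * ∑ a, Z a ω * χ a ω) μ
      ≤ ∫ ω, ((k : ℝ)⁻¹ * ∑ a, Z a ω * χ a ω) ^ 2 ∂μ :=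
        variance_le_expectation_sq hYint.aestronglyMeasurable
    _ ≤ ∫ ω, c * ((k : ℝ)⁻¹ * ∑ a, D a ω * χ a ω) ∂μ :=
        integral_mono_of_nonneg (ae_of_all _ fun ω => sq_nonneg _) hDint hpt
    _ = c * ((k : ℝ)⁻¹ * ∑ a, ∫ ω, D a ω * χ a ω ∂μ) := by
        rw [integral_const_mul, integral_const_mul, integral_finsetSum _ fun a _ => hD a]
    _ ≤ c * ((k : ℝ)⁻¹ * ∑ a, (b * ∫ ω, Z a ω * χ a ω ∂μ + e * ∫ ω, χ a ω ∂μ)) := by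
        gcongr with a
        exact harm a
    _ = c * b * ((k : ℝ)⁻¹ * ∑ a, ∫ ω, Z a ω * χ a ω ∂μ)
          + c * e * ((k : ℝ)⁻¹ * ∑ a, ∫ ω, χ a ω ∂μ) := by
        rw [sum_add_distrib, ← mul_sum, ← mul_sum]
        ring
    _ ≤ c * b * ∫ ω, (k : ℝ)⁻¹ * ∑ a, Z a ω * χ a ω ∂μ + c * e := by
        rw [integral_const_mul, integral_finsetSum _ fun a _ => hZ a]
        exact add_le_add_right (mul_le_of_le_one_right (mul_nonneg hc he) hχk) _

end ExcessLoss

theorem excess_loss_variance_misspecified_general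
    {Ω 𝒳 α : Type*} [MeasurableSpace Ω] [StandardBorelSpace Ω]
    [MeasurableSpace 𝒳] [Fintype α]
    (μ : Measure Ω) [IsProbabilityMeasure μ]
    (k : ℕ)
    (X : Ω → 𝒳) (hX : Measurable X)
    (r : α → Ω → ℝ) (hr_meas : ∀ a, Measurable (r a))
    (hr01 : ∀ a ω, r a ω ∈ Set.Icc (0 : ℝ) 1)
    (χ : α → Ω → ℝ) (hχ_meas : ∀ a, Measurable (χ a))
    (hχ01 : ∀ a ω, χ a ω = 0 ∨ χ a ω = 1)
    (hsum : ∀ᵐ ω ∂μ, ∑ a : α, χ a ω ≤ (k : ℝ))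
    (hcondindep : ∀ a : α, CondIndepFun (MeasurableSpace.comap X inferInstance)
      hX.comap_le (χ a) (r a) μ)
    (f fstar : 𝒳 → α → ℝ)
    (hf_meas : ∀ a, Measurable fun x => f x a)
    (hfstar_meas : ∀ a, Measurable fun x => fstar x a)
    (hf01 : ∀ x a, f x a ∈ Set.Icc (0 : ℝ) 1)
    (hfstar01 : ∀ x a, fstar x a ∈ Set.Icc (0 : ℝ) 1)
    (ε : ℝ)
    (hmisspec : ∀ a : α, ∀ᵐ ω ∂μ,
      |(μ[r a | MeasurableSpace.comap X inferInstance]) ω - fstar (X ω) a| ≤ ε)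
    (Y : Ω → ℝ)
    (hY : Y = fun ω => (1 / (k : ℝ)) *
      ∑ a : α, ((f (X ω) a - r a ω) ^ 2 - (fstar (X ω) a - r a ω) ^ 2) * χ a ω) :
    ProbabilityTheory.variance Y μ ≤ 8 * (∫ ω, Y ω ∂μ) + 16 * ε ^ 2 := by
  have hF a : Measurable[MeasurableSpace.comap X inferInstance] fun ω => f (X ω) a :=
    (hf_meas a).comp (comap_measurable X)
  have hFs a : Measurable[MeasurableSpace.comap X inferInstance] fun ω => fstar (X ω) a :=
    (hfstar_meas a).comp (comap_measurable X)
  have hF01 a ω : f (X ω) a ∈ Set.Icc (0 : ℝ) 1 := hf01 _ a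
  have hFs01 a ω : fstar (X ω) a ∈ Set.Icc (0 : ℝ) 1 := hfstar01 _ a
  have hχ01' a ω : χ a ω ∈ Set.Icc (0 : ℝ) 1 := by
    rcases hχ01 a ω with h | h <;> simp [h]
  subst hY
  simp only [one_div]
  convert variance_inv_mul_sum_le (c := 4) (b := 2) (e := 4 * ε ^ 2)
    (fun a => integrable_sub_sq_sub_sub_sq_mul ((hF a).mono hX.comap_le le_rfl)
      ((hFs a).mono hX.comap_le le_rfl) (hr_meas a) (hχ_meas a) (hF01 a) (hFs01 a) (hr01 a)
      (hχ01' a))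
    (fun a => integrable_sub_sq_mul ((hF a).mono hX.comap_le le_rfl)
      ((hFs a).mono hX.comap_le le_rfl) (hχ_meas a) (hF01 a) (hFs01 a) (hχ01' a))
    (fun a => Integrable.of_mem_Icc 0 1 (hχ_meas a).aemeasurable (ae_of_all _ (hχ01' a)))
    (fun a ω => (hχ01' a ω).1) hsum (by norm_num) (by positivity)
    (fun a ω => sub_sq_sub_sub_sq_sq_le (hF01 a ω) (hFs01 a ω) (hr01 a ω))
    (fun a => integral_sub_sq_mul_le_of_condIndepFun hX.comap_le (hr_meas a) (hχ_meas a)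
      (hF a) (hFs a) (hr01 a) (hχ01' a) (hF01 a) (hFs01 a) (hcondindep a) (hmisspec a))
    using 2 <;> ring

/-- Variance bound for the per-round excess-loss random variable in the misspecified setting:
if `|E[r(a) | X] - f*(X, a)| ≤ ε` a.s. for every arm `a`, then `Var[Y] ≤ 8 E[Y] + 16 ε²`. -/
theorem excess_loss_variance_misspecified
    {Ω 𝒳 α : Type*} [MeasurableSpace Ω] [StandardBorelSpace Ω] [Nonempty Ω]
    [MeasurableSpace 𝒳] [Fintype α]
    (μ : Measure Ω) [IsProbabilityMeasure μ]
    (k : ℕ) (hk : 1 ≤ k)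
    (X : Ω → 𝒳) (hX : Measurable X)
    (r : α → Ω → ℝ) (hr_meas : ∀ a, Measurable (r a))
    (hr01 : ∀ a ω, r a ω ∈ Set.Icc (0 : ℝ) 1)
    (χ : α → Ω → ℝ) (hχ_meas : ∀ a, Measurable (χ a))
    (hχ01 : ∀ a ω, χ a ω = 0 ∨ χ a ω = 1)
    (hsum : ∀ᵐ ω ∂μ, ∑ a : α, χ a ω ≤ (k : ℝ))
    (hcondindep : ∀ a : α, CondIndepFun (MeasurableSpace.comap X inferInstance)
      hX.comap_le (χ a) (r a) μ)
    (f fstar : 𝒳 → α → ℝ)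
    (hf_meas : ∀ a, Measurable fun x => f x a)
    (hfstar_meas : ∀ a, Measurable fun x => fstar x a)
    (hf01 : ∀ x a, f x a ∈ Set.Icc (0 : ℝ) 1)
    (hfstar01 : ∀ x a, fstar x a ∈ Set.Icc (0 : ℝ) 1)
    (ε : ℝ) (hε : 0 ≤ ε)
    (hmisspec : ∀ a : α, ∀ᵐ ω ∂μ,
      |(μ[r a | MeasurableSpace.comap X inferInstance]) ω - fstar (X ω) a| ≤ ε)
    (Y : Ω → ℝ)
    (hY : Y = fun ω => (1 / (k : ℝ)) *
      ∑ a : α, ((f (X ω) a - r a ω) ^ 2 - (fstar (X ω) a - r a ω) ^ 2) * χ a ω) :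
    ProbabilityTheory.variance Y μ ≤ 8 * (∫ ω, Y ω ∂μ) + 16 * ε ^ 2 :=
  excess_loss_variance_misspecified_general μ k X hX r hr_meas hr01 χ hχ_meas hχ01 hsum hcondindep f
    fstar hf_meas hfstar_meas hf01 hfstar01 ε hmisspec Y hY
end

section
/- Let d ≥ 1, η ≥ 0, 0 < β < 1, and let r : ℝ^d × ℝ^d → ℝ be differentiable in its second argument with ‖∇_a r(x, a)‖ ≤ η/‖x − a‖ for all x ≠ a. Let ctr ∈ ℝ^d, rad > 0, and let x ∈ ℝ^d satisfy ‖x − ctr‖ ≥ rad/β. Then for any two points a₁, a₂ in the closed ball of radius rad centered at ctr, |r(x, a₁) − r(x, a₂)| ≤ 2·η·β/(1 − β). -/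
open Metric

/-! A point `x` at distance `D > ρ` from the centre of `closedBall c ρ` is at distance at least
`D - ρ` from every point of the ball, so a gradient bound `η / ‖x - a‖` is uniformly `η / (D - ρ)`
there. The mean value inequality on the (convex) ball, whose diameter is at most `2ρ`, then bounds
the oscillation by `2ηρ / (D - ρ)`, and `D ≥ ρ / β` turns `ρ / (D - ρ)` into at most `β / (1 - β)`. -/

theorem norm_sub_le_of_norm_fderiv_le_div_norm_sub {E F : Type*} [NormedAddCommGroup E]
    [NormedSpace ℝ E] [NormedAddCommGroup F] [NormedSpace ℝ F] {f : E → F} {x c : E}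
    {ρ η : ℝ} (hη : 0 ≤ η) (hxc : ρ < ‖x - c‖)
    (hf : ∀ a ∈ closedBall c ρ, DifferentiableAt ℝ f a)
    (hbound : ∀ a ∈ closedBall c ρ, ‖fderiv ℝ f a‖ ≤ η / ‖x - a‖)
    {a₁ a₂ : E} (ha₁ : a₁ ∈ closedBall c ρ) (ha₂ : a₂ ∈ closedBall c ρ) :
    ‖f a₁ - f a₂‖ ≤ 2 * η * (ρ / (‖x - c‖ - ρ)) := by
  have hρ : 0 ≤ ρ := nonempty_closedBall.mp ⟨a₁, ha₁⟩
  have hfar : ∀ a ∈ closedBall c ρ, ‖x - c‖ - ρ ≤ ‖x - a‖ := fun a ha => by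
    rw [mem_closedBall, dist_eq_norm] at ha
    linarith [norm_sub_le_norm_sub_add_norm_sub x a c]
  have hderiv : ∀ a ∈ closedBall c ρ, ‖fderiv ℝ f a‖ ≤ η / (‖x - c‖ - ρ) := fun a ha =>
    (hbound a ha).trans (div_le_div_of_nonneg_left hη (by linarith) (hfar a ha))
  have hdiam : ‖a₁ - a₂‖ ≤ 2 * ρ := by
    rw [← dist_eq_norm]
    exact (dist_le_diam_of_mem isBounded_closedBall ha₁ ha₂).trans (diam_closedBall hρ)
  calc ‖f a₁ - f a₂‖ ≤ η / (‖x - c‖ - ρ) * ‖a₁ - a₂‖ :=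
        (convex_closedBall c ρ).norm_image_sub_le_of_norm_fderiv_le hf hderiv ha₂ ha₁
    _ ≤ η / (‖x - c‖ - ρ) * (2 * ρ) := by gcongr
    _ = 2 * η * (ρ / (‖x - c‖ - ρ)) := by ring

theorem div_sub_le_div_one_sub_of_div_le {ρ β D : ℝ} (hρ : 0 < ρ) (hβ0 : 0 < β) (hβ1 : β < 1)
    (hD : ρ / β ≤ D) : ρ / (D - ρ) ≤ β / (1 - β) := by
  have hρD : ρ ≤ β * D := by rwa [div_le_iff₀' hβ0] at hD
  have hpos : 0 < D - ρ := by nlinarith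
  rw [div_le_div_iff₀ hpos (by linarith)]
  nlinarith

theorem norm_fderiv_eq_norm_gradient {E : Type*} [NormedAddCommGroup E] [InnerProductSpace ℝ E]
    [CompleteSpace E] (f : E → ℝ) (a : E) : ‖fderiv ℝ f a‖ = ‖gradient f a‖ :=
  ((InnerProductSpace.toDual ℝ E).symm.norm_map _).symm

theorem reward_consistency_far_node_general (d : ℕ) (η : ℝ) (hη : 0 ≤ η)
    (β : ℝ) (hβ0 : 0 < β) (hβ1 : β < 1)
    (r : EuclideanSpace ℝ (Fin d) → EuclideanSpace ℝ (Fin d) → ℝ)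
    (hdiff : ∀ x, Differentiable ℝ (r x))
    (hgrad : ∀ x a, x ≠ a → ‖gradient (r x) a‖ ≤ η / ‖x - a‖)
    (ctr : EuclideanSpace ℝ (Fin d)) (rad : ℝ) (hrad : 0 < rad)
    (x : EuclideanSpace ℝ (Fin d)) (hx : rad / β ≤ ‖x - ctr‖)
    (a₁ a₂ : EuclideanSpace ℝ (Fin d))
    (ha₁ : a₁ ∈ Metric.closedBall ctr rad) (ha₂ : a₂ ∈ Metric.closedBall ctr rad) :
    |r x a₁ - r x a₂| ≤ 2 * η * β / (1 - β) := by
  have hxc : rad < ‖x - ctr‖ := ((lt_div_iff₀ hβ0).2 (mul_lt_of_lt_one_right hrad hβ1)).trans_le hx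
  have hx_out : x ∉ closedBall ctr rad := by simpa [dist_eq_norm] using hxc
  have hbound : ∀ a ∈ closedBall ctr rad, ‖fderiv ℝ (r x) a‖ ≤ η / ‖x - a‖ := fun a ha =>
    (norm_fderiv_eq_norm_gradient _ a).trans_le (hgrad x a (ne_of_mem_of_not_mem ha hx_out).symm)
  calc |r x a₁ - r x a₂| ≤ 2 * η * (rad / (‖x - ctr‖ - rad)) :=
        norm_sub_le_of_norm_fderiv_le_div_norm_sub hη hxc (fun a _ => hdiff x a) hbound ha₁ ha₂
    _ ≤ 2 * η * (β / (1 - β)) :=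
        mul_le_mul_of_nonneg_left (div_sub_le_div_one_sub_of_div_le hrad hβ0 hβ1 hx) (by positivity)
    _ = 2 * η * β / (1 - β) := by ring

/-- Consistency of rewards within a far-away node of the arm hierarchy: if the reward
`r(x, ·)` is differentiable with `‖∇_a r(x,a)‖ ≤ η/‖x - a‖`, and `x` is at distance at least
`rad/β` from the center of a ball of radius `rad`, then the rewards of any two arms in the
ball differ by at most `2ηβ/(1-β)`. -/
theorem reward_consistency_far_node (d : ℕ) (hd : 1 ≤ d) (η : ℝ) (hη : 0 ≤ η)
    (β : ℝ) (hβ0 : 0 < β) (hβ1 : β < 1)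
    (r : EuclideanSpace ℝ (Fin d) → EuclideanSpace ℝ (Fin d) → ℝ)
    (hdiff : ∀ x, Differentiable ℝ (r x))
    (hgrad : ∀ x a, x ≠ a → ‖gradient (r x) a‖ ≤ η / ‖x - a‖)
    (ctr : EuclideanSpace ℝ (Fin d)) (rad : ℝ) (hrad : 0 < rad)
    (x : EuclideanSpace ℝ (Fin d)) (hx : rad / β ≤ ‖x - ctr‖)
    (a₁ a₂ : EuclideanSpace ℝ (Fin d))
    (ha₁ : a₁ ∈ Metric.closedBall ctr rad) (ha₂ : a₂ ∈ Metric.closedBall ctr rad) :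
    |r x a₁ - r x a₂| ≤ 2 * η * β / (1 - β) :=
  reward_consistency_far_node_general d η hη β hβ0 hβ1 r hdiff hgrad ctr rad hrad x hx a₁ a₂ ha₁ ha₂
end

section
/- Let R, R̂, φ, A', γ be real numbers with R ≥ 0, R̂ ≥ 0, φ > 0, A' > 0, and γ = √(A')/(32·φ). If R ≤ R̂ + φ·√(2·A') + √2·φ·√(A' + γ·R), then R ≤ 2·R̂ + A'/(2·γ). -/
/-- Self-bounding algebraic step in the inductive argument relating the true top-k regret `R`
to the estimated top-k regret `Rhat`, where `φ` is the statistical rate, `A' = A - k + 1`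
and `γ = √A'/(32 φ)` is the IGW scaling parameter. -/
theorem regret_self_bounding (R Rhat φ A' γ : ℝ) (hR : 0 ≤ R) (hRhat : 0 ≤ Rhat)
    (hφ : 0 < φ) (hA' : 0 < A') (hγ : γ = Real.sqrt A' / (32 * φ))
    (h : R ≤ Rhat + φ * Real.sqrt (2 * A') + Real.sqrt 2 * φ * Real.sqrt (A' + γ * R)) :
    R ≤ 2 * Rhat + A' / (2 * γ) := by
  set s := Real.sqrt A' with hsdef
  have hs : 0 < s := Real.sqrt_pos.mpr hA'
  have hs2 : s ^ 2 = A' := Real.sq_sqrt hA'.le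
  have hγpos : 0 < γ := by rw [hγ]; positivity
  have h1 : Real.sqrt (2 * A') = Real.sqrt 2 * s := Real.sqrt_mul (by norm_num) A'
  have hgr : 0 ≤ γ * R := mul_nonneg hγpos.le hR
  have h2 : Real.sqrt (A' + γ * R) ≤ s + Real.sqrt (γ * R) := by
    rw [show A' + γ * R = s ^ 2 + Real.sqrt (γ * R) ^ 2 by
      rw [hs2, Real.sq_sqrt hgr]]
    have hnn : 0 ≤ s + Real.sqrt (γ * R) := by positivity
    rw [show s + Real.sqrt (γ * R) = Real.sqrt ((s + Real.sqrt (γ * R)) ^ 2) by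
      rw [Real.sqrt_sq hnn]]
    apply Real.sqrt_le_sqrt
    nlinarith [Real.sqrt_nonneg (γ * R), hs.le]
  have h4 : Real.sqrt (γ * R) = Real.sqrt γ * Real.sqrt R := Real.sqrt_mul hγpos.le R
  have hsa : (Real.sqrt 2) ^ 2 = 2 := Real.sq_sqrt (by norm_num)
  have h3 : Real.sqrt 2 * φ * Real.sqrt (γ * R) ≤ φ ^ 2 * γ + R / 2 := by
    rw [h4]
    have ha2 : (Real.sqrt 2 * φ * Real.sqrt γ) ^ 2 = 2 * φ ^ 2 * γ := by
      rw [mul_pow, mul_pow, hsa, Real.sq_sqrt hγpos.le]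
    nlinarith [sq_nonneg (Real.sqrt 2 * φ * Real.sqrt γ - Real.sqrt R), ha2,
      Real.sq_sqrt hR]
  have hR2 : R ≤ 2 * Rhat + 4 * Real.sqrt 2 * φ * s + 2 * φ ^ 2 * γ := by
    nlinarith [Real.sqrt_nonneg 2, mul_le_mul_of_nonneg_left h2
      (mul_nonneg (Real.sqrt_nonneg 2) hφ.le)]
  have hAγ : A' / (2 * γ) = 16 * φ * s := by
    rw [hγ]
    field_simp
    nlinarith
  have hsqrt2 : Real.sqrt 2 ≤ 3 / 2 := by nlinarith [Real.sqrt_nonneg 2]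
  have hγval : 2 * φ ^ 2 * γ = φ * s / 16 := by rw [hγ]; field_simp; ring
  rw [hAγ]
  nlinarith [mul_pos hφ hs, mul_le_mul_of_nonneg_right hsqrt2
    (mul_nonneg (mul_nonneg (by norm_num : (0:ℝ) ≤ 4) hφ.le) hs.le)]
end
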